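/- arXiv:2412.14463 — 3 statements merged into one kernel-verified Lean document; each statement's English description precedes it below -/
import Mathlib

section
/- Let a : ℤ → ℝ with aₙ > 0 for all n, let b : ℤ → ℝ, and let λ₀ < λ₁ be real numbers. Suppose there exist u, v : ℤ → ℝ such that for all n ∈ ℤ: aₙ₊₁uₙ₊₁ + aₙuₙ₋₁ + bₙuₙ = λ₁uₙ with uₙ > 0, and aₙ₊₁vₙ₊₁ + aₙvₙ₋₁ + bₙvₙ = λ₀vₙ with (−1)ⁿvₙ > 0. Then for every finitely supported function f : ℤ → ℝ one has λ₀·Σₙ fₙ² ≤ Σₙ fₙ·(aₙ₊₁fₙ₊₁ + aₙfₙ₋₁ + bₙfₙ) ≤ λ₁·Σₙ fₙ². -/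
/-!
Ground state representation: if `H c = λ c` with `c > 0`, then for finitely supported `f`
  `λ ‖f‖² - ⟨f, H f⟩ = ∑ₙ aₙ / (cₙ cₙ₋₁) · (cₙ fₙ₋₁ - cₙ₋₁ fₙ)²`,
because pointwise the two sides differ by a telescoping term; hence `⟨f, H f⟩ ≤ λ ‖f‖²`.
Conjugating by `(-1)ⁿ` turns `H_{a,b}` into `-H_{a,-b}` and the alternating `λ₀`-solution into a
positive `(-λ₀)`-solution of `H_{a,-b}`, so the same argument gives the lower bound.
-/

open Function

noncomputable section

def jacobi (a b f : ℤ → ℝ) (n : ℤ) : ℝ :=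
  a (n + 1) * f (n + 1) + a n * f (n - 1) + b n * f n

def groundStateFlux (a c f : ℤ → ℝ) (n : ℤ) : ℝ :=
  a n * f (n - 1) * (c n / c (n - 1) * f (n - 1) - f n)

end

lemma sub_mul_jacobi_eq_sq_add_flux {a b c : ℤ → ℝ} {lam : ℝ} {n : ℤ}
    (hc₀ : c (n - 1) ≠ 0) (hc₁ : c n ≠ 0) (hc : jacobi a b c n = lam * c n) (f : ℤ → ℝ) :
    lam * f n ^ 2 - f n * jacobi a b f n =
      a n / (c n * c (n - 1)) * (c n * f (n - 1) - c (n - 1) * f n) ^ 2 +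
        (groundStateFlux a c f (n + 1) - groundStateFlux a c f n) := by
  unfold jacobi groundStateFlux at *
  rw [add_sub_cancel_right]
  field_simp
  linear_combination (-f n ^ 2 * c (n - 1)) * hc

lemma finsum_sub_shift_eq_zero {d : ℤ → ℝ} (hd : HasFiniteSupport d) :
    ∑ᶠ n, (d (n + 1) - d n) = 0 := by
  rw [finsum_sub_distrib (hd.fun_comp_of_injective (add_left_injective 1)) hd, sub_eq_zero]
  exact finsum_comp_equiv (Equiv.addRight 1)

lemma hasFiniteSupport_of_eq_zero {f g : ℤ → ℝ} (hf : HasFiniteSupport f)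
    (hg : ∀ n, f (n - 1) = 0 → f n = 0 → g n = 0) : HasFiniteSupport g := by
  refine ((hf.fun_comp_of_injective (sub_left_injective (b := 1))).union hf).subset fun n hn => ?_
  by_contra h
  simp_all [not_or]

theorem finsum_mul_jacobi_le_of_pos_eigenfunction {a b c f : ℤ → ℝ} {lam : ℝ}
    (ha : ∀ n, 0 ≤ a n) (hc : ∀ n, 0 < c n) (hc_eig : ∀ n, jacobi a b c n = lam * c n)
    (hf : HasFiniteSupport f) :
    ∑ᶠ n, f n * jacobi a b f n ≤ lam * ∑ᶠ n, f n ^ 2 := by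
  have hsq : HasFiniteSupport fun n => lam * f n ^ 2 :=
    hasFiniteSupport_of_eq_zero hf fun n _ h₁ => by simp [h₁]
  have hweight : HasFiniteSupport fun n =>
      a n / (c n * c (n - 1)) * (c n * f (n - 1) - c (n - 1) * f n) ^ 2 :=
    hasFiniteSupport_of_eq_zero hf fun n h₀ h₁ => by simp [h₀, h₁]
  have hflux : HasFiniteSupport (groundStateFlux a c f) :=
    hasFiniteSupport_of_eq_zero hf fun n h₀ _ => by simp [groundStateFlux, h₀]
  rw [← sub_nonneg, mul_finsum _ _, ← finsum_sub_distrib hsq (hf.fun_mul_left _),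
    finsum_congr fun n => sub_mul_jacobi_eq_sq_add_flux (hc (n - 1)).ne' (hc n).ne' (hc_eig n) f,
    finsum_add_distrib hweight
      ((hflux.fun_comp_of_injective (add_left_injective 1)).fun_sub hflux),
    finsum_sub_shift_eq_zero hflux, add_zero]
  exact finsum_nonneg fun n =>
    mul_nonneg (div_nonneg (ha n) (mul_pos (hc n) (hc (n - 1))).le) (sq_nonneg _)

lemma jacobi_neg_one_zpow_mul (a b f : ℤ → ℝ) (n : ℤ) :
    jacobi a (-b) (fun m => (-1 : ℝ) ^ m * f m) n = -((-1 : ℝ) ^ n * jacobi a b f n) := by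
  have h : (-1 : ℝ) ≠ 0 := by norm_num
  simp only [jacobi, zpow_add_one₀ h, zpow_sub_one₀ h, Pi.neg_apply]
  ring

lemma neg_one_zpow_mul_self (n : ℤ) : (-1 : ℝ) ^ n * (-1 : ℝ) ^ n = 1 := by
  rw [← mul_zpow]
  norm_num

theorem mul_finsum_le_finsum_mul_jacobi_of_alternating_eigenfunction {a b v f : ℤ → ℝ}
    {lam : ℝ} (ha : ∀ n, 0 ≤ a n) (hv : ∀ n, 0 < (-1 : ℝ) ^ n * v n)
    (hv_eig : ∀ n, jacobi a b v n = lam * v n) (hf : HasFiniteSupport f) :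
    lam * ∑ᶠ n, f n ^ 2 ≤ ∑ᶠ n, f n * jacobi a b f n := by
  set g : ℤ → ℝ := fun m => (-1 : ℝ) ^ m * f m
  have hg : HasFiniteSupport g := hf.fun_mul_right _
  have hform : ∀ n, g n * jacobi a (-b) g n = -(f n * jacobi a b f n) := fun n => by
    rw [jacobi_neg_one_zpow_mul]
    linear_combination (-(f n * jacobi a b f n)) * neg_one_zpow_mul_self n
  have hsq : ∀ n, g n ^ 2 = f n ^ 2 := fun n => by
    linear_combination f n ^ 2 * neg_one_zpow_mul_self n
  have key := finsum_mul_jacobi_le_of_pos_eigenfunction (lam := -lam) ha hv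
    (fun n => by rw [jacobi_neg_one_zpow_mul, hv_eig]; ring) hg
  rw [finsum_congr hform, finsum_neg_distrib, finsum_congr hsq] at key
  linarith

theorem stmt3_general (a b : ℤ → ℝ) (ha : ∀ n, 0 < a n) (lam0 lam1 : ℝ)
    (u v : ℤ → ℝ)
    (hupos : ∀ n, 0 < u n)
    (hu : ∀ n : ℤ, a (n + 1) * u (n + 1) + a n * u (n - 1) + b n * u n = lam1 * u n)
    (hvalt : ∀ n : ℤ, 0 < (-1 : ℝ) ^ n * v n)
    (hv : ∀ n : ℤ, a (n + 1) * v (n + 1) + a n * v (n - 1) + b n * v n = lam0 * v n)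
    (f : ℤ → ℝ) (hf : (Function.support f).Finite) :
    lam0 * ∑ᶠ n : ℤ, (f n) ^ 2 ≤
        (∑ᶠ n : ℤ, f n * (a (n + 1) * f (n + 1) + a n * f (n - 1) + b n * f n)) ∧
      (∑ᶠ n : ℤ, f n * (a (n + 1) * f (n + 1) + a n * f (n - 1) + b n * f n)) ≤
        lam1 * ∑ᶠ n : ℤ, (f n) ^ 2 :=
  ⟨mul_finsum_le_finsum_mul_jacobi_of_alternating_eigenfunction (fun n => (ha n).le) hvalt hv hf,
    finsum_mul_jacobi_le_of_pos_eigenfunction (fun n => (ha n).le) hupos hu hf⟩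

/-- If the Jacobi difference equation `H_q w = λ w` admits a positive solution at
`λ = λ₁` and a sign-alternating solution at `λ = λ₀`, then the quadratic form of
`H_q` on finitely supported sequences is bounded between `λ₀` and `λ₁`. -/
theorem stmt3 (a b : ℤ → ℝ) (ha : ∀ n, 0 < a n) (lam0 lam1 : ℝ) (hlt : lam0 < lam1)
    (u v : ℤ → ℝ)
    (hupos : ∀ n, 0 < u n)
    (hu : ∀ n : ℤ, a (n + 1) * u (n + 1) + a n * u (n - 1) + b n * u n = lam1 * u n)
    (hvalt : ∀ n : ℤ, 0 < (-1 : ℝ) ^ n * v n)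
    (hv : ∀ n : ℤ, a (n + 1) * v (n + 1) + a n * v (n - 1) + b n * v n = lam0 * v n)
    (f : ℤ → ℝ) (hf : (Function.support f).Finite) :
    lam0 * ∑ᶠ n : ℤ, (f n) ^ 2 ≤
        (∑ᶠ n : ℤ, f n * (a (n + 1) * f (n + 1) + a n * f (n - 1) + b n * f n)) ∧
      (∑ᶠ n : ℤ, f n * (a (n + 1) * f (n + 1) + a n * f (n - 1) + b n * f n)) ≤
        lam1 * ∑ᶠ n : ℤ, (f n) ^ 2 :=
  stmt3_general a b ha lam0 lam1 u v hupos hu hvalt hv f hf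
end

section
/- Let a : ℤ → ℝ with aₙ > 0 for all n, let b : ℤ → ℝ, let λ₁ ∈ ℝ, and let u : ℤ → ℝ satisfy uₙ > 0 and aₙ₊₁uₙ₊₁ + aₙuₙ₋₁ + bₙuₙ = λ₁uₙ for all n ∈ ℤ. Define φₙ = uₙ₊₁/uₙ, ρ_o(n) = −√(aₙ₊₁/φₙ), ρ_e(n) = √(aₙ₊₁·φₙ), and for f : ℤ → ℝ set (Af)ₙ = ρ_o(n)fₙ₊₁ + ρ_e(n)fₙ and (A*f)ₙ = ρ_o(n−1)fₙ₋₁ + ρ_e(n)fₙ. Then for every f : ℤ → ℝ and every n ∈ ℤ one has (A*(Af))ₙ = λ₁fₙ − (aₙ₊₁fₙ₊₁ + aₙfₙ₋₁ + bₙfₙ). -/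
/-- `φₙ = uₙ₊₁/uₙ` built from a positive solution `u` of the Jacobi equation. -/
noncomputable def phiRatio (u : ℤ → ℝ) (n : ℤ) : ℝ := u (n + 1) / u n

/-- `ρ_o(n) = −√(aₙ₊₁/φₙ)`. -/
noncomputable def rhoO (a u : ℤ → ℝ) (n : ℤ) : ℝ := -Real.sqrt (a (n + 1) / phiRatio u n)

/-- `ρ_e(n) = √(aₙ₊₁·φₙ)`. -/
noncomputable def rhoE (a u : ℤ → ℝ) (n : ℤ) : ℝ := Real.sqrt (a (n + 1) * phiRatio u n)

/-- `(Af)ₙ = ρ_o(n)fₙ₊₁ + ρ_e(n)fₙ`. -/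
noncomputable def opA (a u f : ℤ → ℝ) (n : ℤ) : ℝ := rhoO a u n * f (n + 1) + rhoE a u n * f n

/-- `(A*f)ₙ = ρ_o(n−1)fₙ₋₁ + ρ_e(n)fₙ`. -/
noncomputable def opAstar (a u f : ℤ → ℝ) (n : ℤ) : ℝ :=
  rhoO a u (n - 1) * f (n - 1) + rhoE a u n * f n

/-! `λ₁ − H_q = A*A` rests on three facts: `ρ_o(n) ρ_e(n) = −aₙ₊₁` produces the off-diagonal
terms, while `ρ_o(n−1)² + ρ_e(n)² = aₙ/φₙ₋₁ + aₙ₊₁φₙ`, which the Jacobi equation for `u`, divided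
by `uₙ` (a discrete Riccati equation for `φ`), identifies with `λ₁ − bₙ`. -/

lemma phiRatio_pos {u : ℤ → ℝ} (hu : ∀ n, 0 < u n) (n : ℤ) : 0 < phiRatio u n :=
  div_pos (hu _) (hu _)

section Coefficients

variable {a u : ℤ → ℝ} {n : ℤ}

lemma rhoO_mul_rhoE (ha : 0 ≤ a (n + 1)) (hφ : 0 < phiRatio u n) :
    rhoO a u n * rhoE a u n = -a (n + 1) := by
  have hprod : a (n + 1) / phiRatio u n * (a (n + 1) * phiRatio u n) = a (n + 1) * a (n + 1) := by
    field_simp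
  rw [rhoO, rhoE, neg_mul, ← Real.sqrt_mul (div_nonneg ha hφ.le), hprod, Real.sqrt_mul_self ha]

lemma rhoO_sq (ha : 0 ≤ a (n + 1)) (hφ : 0 ≤ phiRatio u n) :
    rhoO a u n ^ 2 = a (n + 1) / phiRatio u n := by
  rw [rhoO, neg_sq, Real.sq_sqrt (div_nonneg ha hφ)]

lemma rhoE_sq (ha : 0 ≤ a (n + 1)) (hφ : 0 ≤ phiRatio u n) :
    rhoE a u n ^ 2 = a (n + 1) * phiRatio u n :=
  Real.sq_sqrt (mul_nonneg ha hφ)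

end Coefficients

lemma opAstar_opA (a u f : ℤ → ℝ) (n : ℤ) :
    opAstar a u (opA a u f) n =
      (rhoO a u (n - 1) ^ 2 + rhoE a u n ^ 2) * f n
        + rhoO a u (n - 1) * rhoE a u (n - 1) * f (n - 1)
        + rhoO a u n * rhoE a u n * f (n + 1) := by
  rw [opAstar, opA, opA, sub_add_cancel]
  ring

lemma phiRatio_riccati {a b u : ℤ → ℝ} {lam : ℝ} {n : ℤ} (hun : u n ≠ 0)
    (hu : a (n + 1) * u (n + 1) + a n * u (n - 1) + b n * u n = lam * u n) :
    a n / phiRatio u (n - 1) + a (n + 1) * phiRatio u n = lam - b n := by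
  rw [phiRatio, phiRatio, sub_add_cancel, div_div_eq_mul_div]
  field_simp
  linear_combination hu

/-- Factorization `λ₁ − H_q = A*A` from a positive solution at energy `λ₁`. -/
theorem stmt4 (a b : ℤ → ℝ) (ha : ∀ n, 0 < a n) (lam1 : ℝ) (u : ℤ → ℝ)
    (hupos : ∀ n, 0 < u n)
    (hu : ∀ n : ℤ, a (n + 1) * u (n + 1) + a n * u (n - 1) + b n * u n = lam1 * u n)
    (f : ℤ → ℝ) (n : ℤ) :
    opAstar a u (opA a u f) n =
      lam1 * f n - (a (n + 1) * f (n + 1) + a n * f (n - 1) + b n * f n) := by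
  have hφ := phiRatio_pos hupos
  have hsq : rhoO a u (n - 1) ^ 2 + rhoE a u n ^ 2 = lam1 - b n := by
    rw [rhoO_sq (by simpa using (ha n).le) (hφ _).le, rhoE_sq (ha _).le (hφ _).le, sub_add_cancel]
    exact phiRatio_riccati (hupos n).ne' (hu n)
  rw [opAstar_opA, hsq, rhoO_mul_rhoE (ha _).le (hφ _), rhoO_mul_rhoE (ha _).le (hφ _),
    sub_add_cancel]
  ring
end

section
/- Let λ₀ > 2 and m ∈ M_{λ₀}. Then for all z and ζ in the upper half-plane with |z| > 1, |ζ| > 1, z ∉ Σ_{λ₀}, ζ ∉ Σ_{λ₀}, one has |(m(z) − conj(m(ζ)))/(φ(z) − conj(φ(ζ)))|² ≤ (Im m(ζ)/Im φ(ζ)) · (Im m(z)/Im φ(z)). -/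
/-!
On the upper half-plane `H` the map `phi` has a holomorphic inverse branch `phiInv` with values in
`{z | 0 < z.im ∧ 1 < ‖z‖}`, so `m ∘ phiInv` is a holomorphic self-map of `H`. Conjugating by a
Cayley transform, the Schwarz lemma gives the Schwarz–Pick inequality
`|f v - f w| / |f v - conj (f w)| ≤ |v - w| / |v - conj w|`, and the identity
`|a - conj b|² - |a - b|² = 4 Im a Im b` turns it into the stated bound at `v = phi z`, `w = phi ζ`.
-/

open Complex Filter MeasureTheory

noncomputable def phi (z : ℂ) : ℂ := z + z⁻¹

noncomputable def ell (lam : ℝ) : ℝ := (lam + Real.sqrt (lam ^ 2 - 4)) / 2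

/-- The set `Σ_{λ₀} = {|z| = 1} ∪ [−ℓ, −ℓ⁻¹] ∪ [ℓ⁻¹, ℓ]` (intervals regarded inside `ℂ`). -/
noncomputable def SigmaSet (lam : ℝ) : Set ℂ :=
  {z : ℂ | ‖z‖ = 1} ∪
    ((fun x : ℝ => (x : ℂ)) ''
      (Set.Icc (-(ell lam)) (-(ell lam)⁻¹) ∪ Set.Icc (ell lam)⁻¹ (ell lam)))

/-- The class `M_{λ₀}` of `m`-functions: `m` is analytic on `ℂ \ Σ_{λ₀}`, satisfies
`m(conj z) = conj (m z)`, and (i) `m(z) − z → 0` at `∞` with `z(m(z) − z)` bounded near `∞`;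
(ii) `Im m > 0` on the upper half-plane off `Σ_{λ₀}`; (iii) `m(z) ≠ m(z⁻¹)` there;
(iv) `m` is not a rational function of `z + z⁻¹`. -/
def MemM (lam : ℝ) (m : ℂ → ℂ) : Prop :=
  AnalyticOnNhd ℂ m (SigmaSet lam)ᶜ ∧
  (∀ z ∉ SigmaSet lam, m ((starRingEnd ℂ) z) = (starRingEnd ℂ) (m z)) ∧
  Tendsto (fun z : ℂ => m z - z) (cocompact ℂ) (nhds 0) ∧
  (∃ C : ℝ, ∀ᶠ z : ℂ in cocompact ℂ, ‖z * (m z - z)‖ ≤ C) ∧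
  (∀ z : ℂ, 0 < z.im → z ∉ SigmaSet lam → 0 < (m z).im) ∧
  (∀ z : ℂ, 0 < z.im → z ∉ SigmaSet lam → m z - m z⁻¹ ≠ 0) ∧
  ¬ ∃ P Q : Polynomial ℂ,
      (∃ z : ℂ, z ∉ SigmaSet lam ∧ Q.eval (phi z) ≠ 0) ∧
        ∀ z : ℂ, z ∉ SigmaSet lam → m z * Q.eval (phi z) = P.eval (phi z)

/-- The transform `(d_ζ f)(z) = φ(z) − (f(ζ) − f(0))·(1 − (φ(z) − φ(ζ))/(f(z) − f(ζ)))`. -/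
noncomputable def dT (f : ℂ → ℂ) (ζ : ℂ) (z : ℂ) : ℂ :=
  phi z - (f ζ - f 0) * (1 - (phi z - phi ζ) / (f z - f ζ))

open Set Metric ComplexConjugate

namespace Complex

lemma ne_zero_of_im_pos {w : ℂ} (hw : 0 < w.im) : w ≠ 0 :=
  fun h => by simp [h] at hw

lemma re_cpow_inv_two_pos {x : ℂ} (hx : x ∈ slitPlane) : 0 < (x ^ (2⁻¹ : ℂ)).re := by
  rw [cpow_inv_two_re, Real.sqrt_pos]
  rcases mem_slitPlane_iff.mp hx with hre | him
  · linarith [norm_nonneg x]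
  · linarith [neg_abs_le x.re, abs_re_lt_norm.mpr him]

lemma sub_conj_ne_zero_of_im_pos {v w : ℂ} (hv : 0 < v.im) (hw : 0 < w.im) :
    v - conj w ≠ 0 := by
  intro h
  have := congrArg im h
  simp only [sub_im, conj_im, sub_neg_eq_add, zero_im] at this
  linarith

lemma sq_norm_sub_conj_sub_sq_norm_sub (v w : ℂ) :
    ‖v - conj w‖ ^ 2 - ‖v - w‖ ^ 2 = 4 * v.im * w.im := by
  simp only [Complex.sq_norm, normSq_apply, sub_re, sub_im, conj_re, conj_im]
  ring

lemma norm_sub_div_sub_conj_lt_one {v w : ℂ} (hv : 0 < v.im) (hw : 0 < w.im) :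
    ‖(v - w) / (v - conj w)‖ < 1 := by
  rw [norm_div, div_lt_one (norm_pos_iff.mpr (sub_conj_ne_zero_of_im_pos hv hw))]
  have := sq_norm_sub_conj_sub_sq_norm_sub v w
  exact lt_of_pow_lt_pow_left₀ 2 (norm_nonneg _) (by nlinarith [mul_pos hv hw])

noncomputable def discToUpper (w u : ℂ) : ℂ := (w - conj w * u) / (1 - u)

lemma one_sub_ne_zero_of_norm_lt_one {u : ℂ} (hu : ‖u‖ < 1) : 1 - u ≠ 0 :=
  sub_ne_zero.mpr fun h => by simp [← h] at hu

lemma im_discToUpper_pos {w u : ℂ} (hw : 0 < w.im) (hu : ‖u‖ < 1) :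
    0 < (discToUpper w u).im := by
  have hnum : (w - conj w * u).im * (1 - u).re - (w - conj w * u).re * (1 - u).im
      = w.im * (1 - normSq u) := by
    simp only [sub_re, sub_im, mul_re, mul_im, conj_re, conj_im, one_re, one_im, normSq_apply]
    ring
  have hu' : normSq u < 1 := by rw [← Complex.sq_norm]; nlinarith [norm_nonneg u]
  rw [discToUpper, div_im, div_sub_div_same, hnum]
  exact div_pos (mul_pos hw (by linarith))
    (normSq_pos.mpr (one_sub_ne_zero_of_norm_lt_one hu))

lemma discToUpper_zero (w : ℂ) : discToUpper w 0 = w := by simp [discToUpper]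

lemma discToUpper_sub_div_sub_conj {v w : ℂ} (hv : 0 < v.im) (hw : 0 < w.im) :
    discToUpper w ((v - w) / (v - conj w)) = v := by
  have hvw := sub_conj_ne_zero_of_im_pos hv hw
  have hww := sub_conj_ne_zero_of_im_pos hw hw
  rw [discToUpper, div_eq_iff (one_sub_ne_zero_of_norm_lt_one
    (norm_sub_div_sub_conj_lt_one hv hw))]
  field_simp
  ring

lemma differentiableOn_discToUpper (w : ℂ) : DifferentiableOn ℂ (discToUpper w) (ball 0 1) :=
  ((differentiableOn_const _).sub ((differentiableOn_const _).mul differentiableOn_id)).div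
    ((differentiableOn_const _).sub differentiableOn_id)
    fun _ hu => one_sub_ne_zero_of_norm_lt_one (mem_ball_zero_iff.mp hu)

variable {f : ℂ → ℂ}

theorem norm_sub_div_sub_conj_le_of_mapsTo_upperHalfPlane
    (hf : DifferentiableOn ℂ f {w | 0 < w.im}) (hmaps : MapsTo f {w | 0 < w.im} {w | 0 < w.im})
    {v w : ℂ} (hv : 0 < v.im) (hw : 0 < w.im) :
    ‖(f v - f w) / (f v - conj (f w))‖ ≤ ‖(v - w) / (v - conj w)‖ := by
  set F : ℂ → ℂ := fun u => (f (discToUpper w u) - f w) / (f (discToUpper w u) - conj (f w))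
  have him : MapsTo (discToUpper w) (ball 0 1) {w | 0 < w.im} :=
    fun u hu => im_discToUpper_pos hw (mem_ball_zero_iff.mp hu)
  have hfg := hf.comp (differentiableOn_discToUpper w) him
  have hFd : DifferentiableOn ℂ F (ball 0 1) :=
    (hfg.sub_const _).div (hfg.sub_const _) fun u hu =>
      sub_conj_ne_zero_of_im_pos (hmaps (him hu)) (hmaps hw)
  have hFmaps : MapsTo F (ball 0 1) (closedBall 0 1) := fun u hu =>
    mem_closedBall_zero_iff.mpr (norm_sub_div_sub_conj_lt_one (hmaps (him hu)) (hmaps hw)).le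
  have hF0 : F 0 = 0 := by simp [F, discToUpper_zero]
  simpa [F, discToUpper_sub_div_sub_conj hv hw] using
    norm_le_norm_of_mapsTo_ball hFd hFmaps hF0 (norm_sub_div_sub_conj_lt_one hv hw)

lemma sq_norm_sub_conj_div_le_of_norm_sub_div_le {a b v w : ℂ} (ha : 0 < a.im) (hb : 0 < b.im)
    (hv : 0 < v.im) (hw : 0 < w.im)
    (h : ‖(a - b) / (a - conj b)‖ ≤ ‖(v - w) / (v - conj w)‖) :
    ‖(a - conj b) / (v - conj w)‖ ^ 2 ≤ (b.im / w.im) * (a.im / v.im) := by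
  have hP := norm_pos_iff.mpr (sub_conj_ne_zero_of_im_pos ha hb)
  have hQ := norm_pos_iff.mpr (sub_conj_ne_zero_of_im_pos hv hw)
  rw [norm_div, norm_div, div_le_div_iff₀ hP hQ] at h
  have hsq := pow_le_pow_left₀ (by positivity) h 2
  have hab := sq_norm_sub_conj_sub_sq_norm_sub a b
  have hvw := sq_norm_sub_conj_sub_sq_norm_sub v w
  rw [norm_div, div_pow, div_mul_div_comm, div_le_div_iff₀ (by positivity) (mul_pos hw hv)]
  nlinarith

theorem sq_norm_sub_conj_div_le_of_mapsTo_upperHalfPlane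
    (hf : DifferentiableOn ℂ f {w | 0 < w.im}) (hmaps : MapsTo f {w | 0 < w.im} {w | 0 < w.im})
    {v w : ℂ} (hv : 0 < v.im) (hw : 0 < w.im) :
    ‖(f v - conj (f w)) / (v - conj w)‖ ^ 2 ≤ ((f w).im / w.im) * ((f v).im / v.im) :=
  sq_norm_sub_conj_div_le_of_norm_sub_div_le (hmaps hv) (hmaps hw) hv hw
    (norm_sub_div_sub_conj_le_of_mapsTo_upperHalfPlane hf hmaps hv hw)

end Complex

lemma im_phi (z : ℂ) : (phi z).im = z.im * (1 - (normSq z)⁻¹) := by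
  rw [phi, add_im, inv_im]
  ring

lemma im_phi_pos {z : ℂ} (hz : 0 < z.im) (hzabs : 1 < ‖z‖) : 0 < (phi z).im := by
  have hns : 1 < normSq z := by rw [← Complex.sq_norm]; nlinarith
  rw [im_phi]
  exact mul_pos hz (sub_pos.mpr (inv_lt_one_of_one_lt₀ hns))

lemma one_sub_four_div_sq_mem_slitPlane {w : ℂ} (hw : 0 < w.im) :
    1 - 4 / w ^ 2 ∈ slitPlane := by
  rw [mem_slitPlane_iff]
  by_cases hre : w.re = 0
  · left
    have hw2 : w ^ 2 = ((-w.im ^ 2 : ℝ) : ℂ) := by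
      conv_lhs => rw [← re_add_im w, hre]
      push_cast
      ring_nf
      rw [I_sq]
      ring
    rw [hw2, ← ofReal_ofNat, ← ofReal_div, ← ofReal_one, ← ofReal_sub, ofReal_re, div_neg]
    have : 0 < 4 / w.im ^ 2 := by positivity
    linarith
  · right
    have hw0 := ne_zero_of_im_pos hw
    have him : (w ^ 2).im ≠ 0 := by
      rw [pow_two, mul_im]
      intro h
      exact mul_ne_zero hre hw.ne' (by linarith)
    simp [div_im, ne_zero_of_im_pos hw, him]

/-- The branch of the inverse of `phi` that maps the upper half-plane onto
`{z | 0 < z.im ∧ 1 < ‖z‖}`. -/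
noncomputable def phiInv (w : ℂ) : ℂ := w / 2 * (1 + (1 - 4 / w ^ 2) ^ (2⁻¹ : ℂ))

lemma phiInv_mul_sub_phiInv {w : ℂ} (hw : w ≠ 0) : phiInv w * (w - phiInv w) = 1 := by
  obtain ⟨r, hr, hdef⟩ : ∃ r, r ^ 2 = 1 - 4 / w ^ 2 ∧ phiInv w = w / 2 * (1 + r) :=
    ⟨_, cpow_ofNat_inv_pow _ 2, rfl⟩
  rw [hdef]
  calc w / 2 * (1 + r) * (w - w / 2 * (1 + r)) = w ^ 2 / 4 * (1 - r ^ 2) := by ring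
    _ = 1 := by rw [hr]; field_simp; ring

lemma sub_phiInv {w : ℂ} (hw : w ≠ 0) : w - phiInv w = (phiInv w)⁻¹ :=
  eq_inv_of_mul_eq_one_right (phiInv_mul_sub_phiInv hw)

lemma phi_phiInv {w : ℂ} (hw : w ≠ 0) : phi (phiInv w) = w := by
  rw [phi, ← sub_phiInv hw, add_sub_cancel]

lemma one_lt_norm_phiInv {w : ℂ} (hw : 0 < w.im) : 1 < ‖phiInv w‖ := by
  have hw0 := ne_zero_of_im_pos hw
  obtain ⟨r, hr, hdef⟩ : ∃ r : ℂ, 0 < r.re ∧ phiInv w = w / 2 * (1 + r) :=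
    ⟨_, re_cpow_inv_two_pos (one_sub_four_div_sq_mem_slitPlane hw), rfl⟩
  have hpos : 0 < ‖phiInv w‖ :=
    norm_pos_iff.mpr (left_ne_zero_of_mul_eq_one (phiInv_mul_sub_phiInv hw0))
  -- `(phiInv w)⁻¹ = w / 2 * (1 - r)` is the other root, and `0 < r.re` makes it the smaller one.
  have hlt : ‖(phiInv w)⁻¹‖ < ‖phiInv w‖ := by
    have h1 : ‖1 - r‖ < ‖1 + r‖ := by
      rw [← sq_lt_sq₀ (norm_nonneg _) (norm_nonneg _), Complex.sq_norm, Complex.sq_norm]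
      simp only [normSq_apply, add_re, add_im, sub_re, sub_im, one_re, one_im]
      nlinarith
    rw [← sub_phiInv hw0, hdef, show w - w / 2 * (1 + r) = w / 2 * (1 - r) by ring,
      norm_mul, norm_mul]
    exact mul_lt_mul_of_pos_left h1 (norm_pos_iff.mpr (div_ne_zero hw0 two_ne_zero))
  rw [norm_inv, inv_lt_iff_one_lt_mul₀ hpos] at hlt
  nlinarith

lemma im_phiInv_pos {w : ℂ} (hw : 0 < w.im) : 0 < (phiInv w).im := by
  have hw0 := ne_zero_of_im_pos hw
  have hns : 1 < normSq (phiInv w) := by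
    rw [← Complex.sq_norm]; nlinarith [one_lt_norm_phiInv hw]
  rw [← phi_phiInv hw0, im_phi] at hw
  exact pos_of_mul_pos_left hw (sub_pos.mpr (inv_lt_one_of_one_lt₀ hns)).le

lemma phiInv_phi {z : ℂ} (hz : 0 < z.im) (hzabs : 1 < ‖z‖) : phiInv (phi z) = z := by
  have hw := im_phi_pos hz hzabs
  have hw0 := ne_zero_of_im_pos hw
  have hnorm := one_lt_norm_phiInv hw
  have ha0 := left_ne_zero_of_mul_eq_one (phiInv_mul_sub_phiInv hw0)
  have hphi := phi_phiInv hw0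
  generalize phiInv (phi z) = a at hnorm ha0 hphi ⊢
  have hz0 := ne_zero_of_im_pos hz
  have key : (a - z) * (a * z - 1) = 0 := by
    rw [phi, phi] at hphi
    field_simp at hphi
    linear_combination hphi
  rcases mul_eq_zero.mp key with h | h
  · exact sub_eq_zero.mp h
  · have : ‖a‖ * ‖z‖ = 1 := by rw [← norm_mul, sub_eq_zero.mp h, norm_one]
    nlinarith

lemma differentiableAt_phiInv {w : ℂ} (hw : 0 < w.im) : DifferentiableAt ℂ phiInv w := by
  have hw0 := ne_zero_of_im_pos hw
  have hq : DifferentiableAt ℂ (fun w : ℂ => 1 - 4 / w ^ 2) w :=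
    (differentiableAt_const _).sub
      ((differentiableAt_const _).div (differentiableAt_id.pow 2) (pow_ne_zero 2 hw0))
  exact (differentiableAt_id.div_const 2).mul
    ((differentiableAt_const 1).add (hq.cpow_const (one_sub_four_div_sq_mem_slitPlane hw)))

lemma notMem_SigmaSet {lam : ℝ} {z : ℂ} (hz : z.im ≠ 0) (hzabs : ‖z‖ ≠ 1) :
    z ∉ SigmaSet lam := by
  rintro (h | ⟨x, -, rfl⟩)
  · exact hzabs h
  · exact hz (ofReal_im x)

lemma phiInv_notMem_SigmaSet {lam : ℝ} {w : ℂ} (hw : 0 < w.im) : phiInv w ∉ SigmaSet lam :=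
  notMem_SigmaSet (im_phiInv_pos hw).ne' (one_lt_norm_phiInv hw).ne'

namespace MemM

variable {lam : ℝ} {m : ℂ → ℂ}

lemma differentiableOn_comp_phiInv (hm : MemM lam m) :
    DifferentiableOn ℂ (m ∘ phiInv) {w | 0 < w.im} := fun _ hw =>
  ((hm.1 _ (phiInv_notMem_SigmaSet hw)).differentiableAt.comp _
    (differentiableAt_phiInv hw)).differentiableWithinAt

lemma mapsTo_comp_phiInv (hm : MemM lam m) :
    MapsTo (m ∘ phiInv) {w | 0 < w.im} {w | 0 < w.im} := by
  obtain ⟨-, -, -, -, him_pos, -⟩ := hm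
  exact fun _ hw => him_pos _ (im_phiInv_pos hw) (phiInv_notMem_SigmaSet hw)

end MemM

theorem stmt17_general (lam : ℝ) (m : ℂ → ℂ) (hm : MemM lam m)
    (z : ℂ) (hz : 0 < z.im) (hzabs : 1 < ‖z‖)
    (ζ : ℂ) (hζ : 0 < ζ.im) (hζabs : 1 < ‖ζ‖) :
    ‖(m z - (starRingEnd ℂ) (m ζ)) / (phi z - (starRingEnd ℂ) (phi ζ))‖ ^ 2 ≤
      ((m ζ).im / (phi ζ).im) * ((m z).im / (phi z).im) := by
  have h := sq_norm_sub_conj_div_le_of_mapsTo_upperHalfPlane hm.differentiableOn_comp_phiInv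
    hm.mapsTo_comp_phiInv (im_phi_pos hz hzabs) (im_phi_pos hζ hζabs)
  simpa only [Function.comp_apply, phiInv_phi hz hzabs, phiInv_phi hζ hζabs] using h

/-- Cauchy–Schwarz bound for `m ∈ M_{λ₀}` on the region `Im z > 0`, `|z| > 1`:
`|(m(z) − conj m(ζ))/(φ(z) − conj φ(ζ))|² ≤ (Im m(ζ)/Im φ(ζ))·(Im m(z)/Im φ(z))`. -/
theorem stmt17 (lam : ℝ) (hlam : 2 < lam) (m : ℂ → ℂ) (hm : MemM lam m)
    (z : ℂ) (hz : 0 < z.im) (hzabs : 1 < ‖z‖) (hzS : z ∉ SigmaSet lam)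
    (ζ : ℂ) (hζ : 0 < ζ.im) (hζabs : 1 < ‖ζ‖) (hζS : ζ ∉ SigmaSet lam) :
    ‖(m z - (starRingEnd ℂ) (m ζ)) / (phi z - (starRingEnd ℂ) (phi ζ))‖ ^ 2 ≤
      ((m ζ).im / (phi ζ).im) * ((m z).im / (phi z).im) :=
  stmt17_general lam m hm z hz hzabs ζ hζ hζabs
end
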